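/- arXiv:1603.05089 — 3 statements merged into one kernel-verified Lean document; each statement's English description precedes it below -/
import Mathlib

section
/- Let λ, α > 0 and consider the cubic p(a) = λαa² − a³ − 1. Then p has exactly one negative real root, and p has two (counted distinctly) strictly positive real roots if and only if λα > (27/4)^{1/3}. -/
/-- for `p a = λα a² − a³ − 1` with `λ, α > 0`, `p` has exactly one
negative root, and has two distinct strictly positive roots iff `λα > (27/4)^(1/3)`. -/
theorem cubic_roots_structure (lam alpha : ℝ) (hlam : 0 < lam) (halpha : 0 < alpha)
    (p : ℝ → ℝ) (hp : ∀ a, p a = lam * alpha * a ^ 2 - a ^ 3 - 1) :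
    (∃! x : ℝ, x < 0 ∧ p x = 0) ∧
    ((∃ x y : ℝ, 0 < x ∧ 0 < y ∧ x ≠ y ∧ p x = 0 ∧ p y = 0) ↔
      lam * alpha > ((27 : ℝ) / 4) ^ ((1 : ℝ) / 3)) := by
  set c := lam * alpha with hc
  have hc0 : 0 < c := mul_pos hlam halpha
  have hpf : p = fun a => c * a ^ 2 - a ^ 3 - 1 := funext hp
  have hcont : Continuous p := by rw [hpf]; continuity
  have hder : ∀ a : ℝ, HasDerivAt p (c * (2 * a) - 3 * a ^ 2) a := by
    intro a
    rw [hpf]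
    have h2 : HasDerivAt (fun a : ℝ => a ^ 2) (2 * a) a := by
      simpa using hasDerivAt_pow 2 a
    have h3 : HasDerivAt (fun a : ℝ => a ^ 3) (3 * a ^ 2) a := by
      simpa using hasDerivAt_pow 3 a
    exact ((h2.const_mul c).sub h3).sub_const 1
  have hderiv : ∀ a : ℝ, deriv p a = c * (2 * a) - 3 * a ^ 2 := fun a => (hder a).deriv
  set r : ℝ := ((27 : ℝ) / 4) ^ ((1 : ℝ) / 3) with hrdef
  have hr0 : 0 < r := Real.rpow_pos_of_pos (by norm_num) _
  have hr3 : r ^ 3 = 27 / 4 := by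
    rw [hrdef, ← Real.rpow_natCast (((27 : ℝ) / 4) ^ ((1 : ℝ) / 3)) 3,
      ← Real.rpow_mul (by norm_num : (0:ℝ) ≤ 27/4)]
    norm_num
  set m : ℝ := 2 * c / 3 with hmdef
  have hm0 : 0 < m := by positivity
  -- monotonicity pieces
  have hanti_neg : StrictAntiOn p (Set.Iic 0) := by
    apply strictAntiOn_of_deriv_neg (convex_Iic 0) hcont.continuousOn
    intro x hx
    rw [interior_Iic] at hx
    rw [hderiv]
    nlinarith [hx.out, sq_nonneg x]
  have hmono : StrictMonoOn p (Set.Icc 0 m) := by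
    apply strictMonoOn_of_deriv_pos (convex_Icc 0 m) hcont.continuousOn
    intro x hx
    rw [interior_Icc] at hx
    obtain ⟨hx1, hx2⟩ := hx
    rw [hderiv]
    nlinarith
  have hanti : StrictAntiOn p (Set.Ici m) := by
    apply strictAntiOn_of_deriv_neg (convex_Ici m) hcont.continuousOn
    intro x hx
    rw [interior_Ici] at hx
    have hxm : m < x := hx
    rw [hderiv]
    nlinarith
  constructor
  · -- exactly one negative root
    have h1 : (0:ℝ) ∈ Set.Icc (p 0) (p (-(c+1))) := by
      constructor
      · rw [hp]; nlinarith
      · rw [hp]; nlinarith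
    have hsub := intermediate_value_Icc' (by linarith : -(c+1) ≤ (0:ℝ)) hcont.continuousOn
    obtain ⟨x, hx, hpx⟩ := hsub h1
    have hxne : x ≠ 0 := by
      intro h; rw [h, hp] at hpx; norm_num at hpx
    have hxneg : x < 0 := lt_of_le_of_ne hx.2 hxne
    refine ⟨x, ⟨hxneg, hpx⟩, ?_⟩
    rintro y ⟨hyneg, hpy⟩
    rcases lt_trichotomy y x with h | h | h
    · have := hanti_neg (le_of_lt hyneg) (le_of_lt hxneg) h
      rw [hpx, hpy] at this; linarith
    · exact h
    · have := hanti_neg (le_of_lt hxneg) (le_of_lt hyneg) h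
      rw [hpx, hpy] at this; linarith
  · constructor
    · -- two distinct positive roots → c > r
      rintro ⟨x, y, hx0, hy0, hxy, hpx, hpy⟩
      -- wlog x < y
      wlog hlt : x < y generalizing x y
      · exact this y x hy0 hx0 hxy.symm hpy hpx (lt_of_le_of_ne (not_lt.mp hlt) hxy.symm)
      have hkey : 0 < p m := by
        by_cases hym : y ≤ m
        · exfalso
          have := hmono ⟨le_of_lt hx0, le_of_lt (lt_of_lt_of_le hlt hym)⟩
            ⟨le_of_lt hy0, hym⟩ hlt
          rw [hpx, hpy] at this; exact lt_irrefl 0 this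
        · push_neg at hym
          by_cases hxm : m ≤ x
          · exfalso
            have := hanti hxm (le_trans hxm hlt.le) hlt
            rw [hpx, hpy] at this; exact lt_irrefl 0 this
          · have := hanti (le_refl m) (le_of_lt hym) hym
            rw [hpy] at this; exact this
      have hpm : c * m ^ 2 - m ^ 3 - 1 > 0 := by rw [← hp]; exact hkey
      have hc3 : c ^ 3 > 27 / 4 := by
        rw [hmdef] at hpm; nlinarith
      by_contra hle
      push_neg at hle
      have : c ^ 3 ≤ r ^ 3 := pow_le_pow_left₀ (le_of_lt hc0) hle 3
      rw [hr3] at this; linarith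
    · -- c > r → two distinct positive roots
      intro hcr
      have hc3 : 27 / 4 < c ^ 3 := by
        rw [← hr3]; exact pow_lt_pow_left₀ hcr (le_of_lt hr0) (by norm_num)
      have hpm : 0 < p m := by
        rw [hp, hmdef]; nlinarith
      -- first root in (0, m)
      have h1 : (0:ℝ) ∈ Set.Icc (p 0) (p m) := by
        constructor
        · rw [hp]; nlinarith
        · exact le_of_lt hpm
      obtain ⟨x, hx, hpx⟩ := intermediate_value_Icc (le_of_lt hm0) hcont.continuousOn h1
      have hx0 : 0 < x := by
        rcases lt_or_eq_of_le hx.1 with h | h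
        · exact h
        · exfalso; rw [← h, hp] at hpx; norm_num at hpx
      have hxm : x < m := by
        rcases lt_or_eq_of_le hx.2 with h | h
        · exact h
        · exfalso; rw [h] at hpx; rw [hpx] at hpm; exact lt_irrefl 0 hpm
      -- second root in (m, c+1]
      have hmb : m ≤ c + 1 := by rw [hmdef]; linarith
      have h2 : (0:ℝ) ∈ Set.Icc (p (c+1)) (p m) := by
        constructor
        · rw [hp]; nlinarith
        · exact le_of_lt hpm
      obtain ⟨y, hy, hpy⟩ := intermediate_value_Icc' hmb hcont.continuousOn h2
      have hym : m < y := by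
        rcases lt_or_eq_of_le hy.1 with h | h
        · exact h
        · exfalso; rw [← h] at hpy; rw [hpy] at hpm; exact lt_irrefl 0 hpm
      exact ⟨x, y, hx0, lt_trans hm0 hym, ne_of_lt (lt_trans hxm hym), hpx, hpy⟩
end

section
/- Let λ, α > 0 with λα < (27/4)^{1/3}, and p(a) = λαa² − a³ − 1. Then p has no strictly positive real root; equivalently, its two non-real complex roots have strictly positive real part and nonzero imaginary part. -/
open Complex in
/-- in the subcritical regime `λα < (27/4)^(1/3)`, the cubic
`p a = λα a² − a³ − 1` has no strictly positive real root; equivalently its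
non-real complex roots have strictly positive real part and nonzero imaginary part. -/
theorem cubic_subcritical (lam alpha : ℝ) (hlam : 0 < lam) (halpha : 0 < alpha)
    (hsub : lam * alpha < ((27 : ℝ) / 4) ^ ((1 : ℝ) / 3))
    (p : ℝ → ℝ) (hp : ∀ a, p a = lam * alpha * a ^ 2 - a ^ 3 - 1) :
    (∀ x : ℝ, 0 < x → p x ≠ 0) ∧
    (∀ z : ℂ, (lam : ℂ) * (alpha : ℂ) * z ^ 2 - z ^ 3 - 1 = 0 → z.im ≠ 0 →
      0 < z.re ∧ z.im ≠ 0) := by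
  set c := lam * alpha with hc
  have hcpos : 0 < c := mul_pos hlam halpha
  have hcube : c ^ 3 < 27 / 4 := by
    have ht : (((27 : ℝ) / 4) ^ ((1 : ℝ) / 3)) ^ 3 = 27 / 4 := by
      rw [← Real.rpow_natCast (((27 : ℝ) / 4) ^ ((1 : ℝ) / 3)) 3,
        ← Real.rpow_mul (by norm_num)]
      norm_num
    calc c ^ 3 < (((27 : ℝ) / 4) ^ ((1 : ℝ) / 3)) ^ 3 := by
          exact pow_lt_pow_left₀ hsub hcpos.le (by norm_num)
      _ = 27 / 4 := ht
  constructor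
  · intro x hx hpx
    rw [hp] at hpx
    nlinarith [mul_nonneg (sq_nonneg (3 * x - 2 * c)) (by nlinarith : (0:ℝ) ≤ 3 * x + c),
      hpx, hcube]
  · intro z hz him
    refine ⟨?_, him⟩
    set x := z.re
    set y := z.im
    have h1 : c * (x ^ 2 - y ^ 2) - (x ^ 3 - 3 * x * y ^ 2) - 1 = 0 := by
      have := congrArg Complex.re hz
      simp [Complex.ext_iff, pow_succ, Complex.mul_re, Complex.mul_im, x, y] at this ⊢
      ring_nf
      ring_nf at this
      linarith
    have h2 : c * (2 * x * y) - (3 * x ^ 2 * y - y ^ 3) = 0 := by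
      have := congrArg Complex.im hz
      simp [Complex.ext_iff, pow_succ, Complex.mul_re, Complex.mul_im, x, y] at this ⊢
      ring_nf
      ring_nf at this
      linarith
    have hy2 : y ^ 2 = 3 * x ^ 2 - 2 * c * x := by
      have : y * (2 * c * x - 3 * x ^ 2 + y ^ 2) = 0 := by ring_nf; ring_nf at h2; linarith
      rcases mul_eq_zero.mp this with h | h
      · exact absurd h him
      · linarith
    -- substitute into real part: 8 x^3 - 8 c x^2 + 2 c^2 x - 1 = 0
    have hmain : 8 * x ^ 3 - 8 * c * x ^ 2 + 2 * c ^ 2 * x - 1 = 0 := by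
      nlinarith [h1, hy2]
    by_contra hxle
    push_neg at hxle
    nlinarith [mul_nonneg (mul_nonneg hcpos.le hcpos.le) (neg_nonneg.mpr hxle),
      mul_nonneg hcpos.le (sq_nonneg x),
      sq_nonneg x, mul_nonpos_of_nonneg_of_nonpos (sq_nonneg x) hxle]
end

section
/- Let v : [0, ∞) → ℝ be continuous, nonnegative, with v(ξ) ~ a(Ψ − ψ(ξ)) as ξ → ∞, where ψ(ξ) = ∫₀^ξ v, a > 0, and Ψ = ∫₀^∞ v < ∞. Then ψ(ξ) → Ψ and Ψ − ψ(ξ) = O(e^{−(a−ε)ξ}) for every ε ∈ (0, a); in particular v decays exponentially. -/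
/-!
The gap `g = Ψ - ψ` is nonnegative (since `ψ` increases to `Ψ`) and satisfies `g' = -v`.
The asymptotic condition turns into the differential inequality `g' ≤ -(a - ε) g` for large
`ξ`, and Grönwall's inequality then bounds `g` by a multiple of `e^{-(a - ε) ξ}`.
-/

open Filter Asymptotics Set MeasureTheory

theorem le_mul_exp_of_hasDerivAt_le {g g' : ℝ → ℝ} {b R : ℝ}
    (hg : ∀ x ≥ R, HasDerivAt g (g' x) x) (hbound : ∀ x ≥ R, g' x ≤ -b * g x) :
    ∀ x ≥ R, g x ≤ g R * Real.exp (-b * (x - R)) := by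
  intro x hx
  have hcont : ContinuousOn g (Icc R x) := fun y hy => (hg y hy.1).continuousAt.continuousWithinAt
  have := le_gronwallBound_of_liminf_deriv_right_le (K := -b) (ε := 0) hcont
    (fun y hy _ hr => (hg y hy.1).hasDerivWithinAt.liminf_right_slope_le hr) le_rfl
    (fun y hy => (add_zero (-b * g y)).symm ▸ hbound y hy.1) x ⟨hx, le_rfl⟩
  rwa [gronwallBound_ε0] at this

theorem isBigO_exp_of_hasDerivAt_le {g g' : ℝ → ℝ} {b : ℝ}
    (hg : ∀ᶠ x in atTop, HasDerivAt g (g' x) x) (hbound : ∀ᶠ x in atTop, g' x ≤ -b * g x)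
    (hg_nonneg : ∀ᶠ x in atTop, 0 ≤ g x) :
    g =O[atTop] fun x => Real.exp (-b * x) := by
  obtain ⟨R, hR⟩ := (hg.and (hbound.and hg_nonneg)).exists_forall_of_atTop
  have hle := le_mul_exp_of_hasDerivAt_le (fun x hx => (hR x hx).1) fun x hx => (hR x hx).2.1
  refine isBigO_iff.2 ⟨g R * Real.exp (b * R), ?_⟩
  filter_upwards [eventually_ge_atTop R] with x hx
  rw [Real.norm_of_nonneg (hR x hx).2.2, Real.norm_of_nonneg (Real.exp_pos _).le, mul_assoc,
    ← Real.exp_add]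
  convert hle x hx using 3
  ring

theorem eventually_sub_mul_le_of_isLittleO {u g : ℝ → ℝ} {a ε : ℝ} (hε : 0 < ε)
    (h : (fun x => u x - a * g x) =o[atTop] g) (hg_nonneg : ∀ᶠ x in atTop, 0 ≤ g x) :
    ∀ᶠ x in atTop, (a - ε) * g x ≤ u x := by
  filter_upwards [h.def hε, hg_nonneg] with x hx hgx
  rw [Real.norm_eq_abs, Real.norm_of_nonneg hgx] at hx
  linarith [neg_abs_le (u x - a * g x)]

open MeasureTheory Asymptotics Filter in
theorem decay_condition_forces_exponential_decay_general (v : ℝ → ℝ)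
    (hv_cont : Continuous v) (hv_nonneg : ∀ ξ, 0 ≤ v ξ)
    (hv_int : IntegrableOn v (Set.Ioi 0))
    (ψ : ℝ → ℝ) (hψ : ∀ ξ, ψ ξ = ∫ s in (0 : ℝ)..ξ, v s)
    (Ψ : ℝ) (hΨ : Ψ = ∫ s in Set.Ioi (0 : ℝ), v s)
    (a : ℝ)
    (hasymp : (fun ξ => v ξ - a * (Ψ - ψ ξ)) =o[atTop] fun ξ => Ψ - ψ ξ) :
    Tendsto ψ atTop (nhds Ψ) ∧
    ∀ ε ∈ Set.Ioo 0 a,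
      (fun ξ => Ψ - ψ ξ) =O[atTop] fun ξ => Real.exp (-(a - ε) * ξ) := by
  have hψ_eq : ψ = fun ξ => ∫ s in (0 : ℝ)..ξ, v s := funext hψ
  have hderiv (ξ : ℝ) : HasDerivAt ψ (v ξ) ξ :=
    hψ_eq ▸ (hv_cont.integral_hasStrictDerivAt 0 ξ).hasDerivAt
  have htend : Tendsto ψ atTop (nhds Ψ) :=
    hψ_eq ▸ hΨ ▸ intervalIntegral_tendsto_integral_Ioi 0 hv_int tendsto_id
  have hgap_nonneg : ∀ ξ, 0 ≤ Ψ - ψ ξ := fun ξ =>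
    sub_nonneg.2 ((monotone_of_hasDerivAt_nonneg hderiv hv_nonneg).ge_of_tendsto htend ξ)
  refine ⟨htend, fun ε hε => isBigO_exp_of_hasDerivAt_le (g' := fun ξ => -v ξ)
    (.of_forall fun ξ => (hderiv ξ).const_sub Ψ) ?_ (.of_forall hgap_nonneg)⟩
  filter_upwards [eventually_sub_mul_le_of_isLittleO hε.1 hasymp (.of_forall hgap_nonneg)]
    with ξ hξ
  linarith

open MeasureTheory Asymptotics Filter in
/-- if `v ≥ 0` is continuous and integrable on `(0,∞)` with total mass
`Ψ`, `ψ(ξ) = ∫₀^ξ v`, and `v(ξ) ~ a(Ψ − ψ(ξ))` as `ξ → ∞` with `a > 0`, then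
`ψ(ξ) → Ψ` and `Ψ − ψ(ξ) = O(e^{−(a−ε)ξ})` for every `ε ∈ (0, a)`. -/
theorem decay_condition_forces_exponential_decay (v : ℝ → ℝ)
    (hv_cont : Continuous v) (hv_nonneg : ∀ ξ, 0 ≤ v ξ)
    (hv_int : IntegrableOn v (Set.Ioi 0))
    (ψ : ℝ → ℝ) (hψ : ∀ ξ, ψ ξ = ∫ s in (0 : ℝ)..ξ, v s)
    (Ψ : ℝ) (hΨ : Ψ = ∫ s in Set.Ioi (0 : ℝ), v s)
    (a : ℝ) (ha : 0 < a)
    (hasymp : (fun ξ => v ξ - a * (Ψ - ψ ξ)) =o[atTop] fun ξ => Ψ - ψ ξ) :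
    Tendsto ψ atTop (nhds Ψ) ∧
    ∀ ε ∈ Set.Ioo 0 a,
      (fun ξ => Ψ - ψ ξ) =O[atTop] fun ξ => Real.exp (-(a - ε) * ξ) :=
  decay_condition_forces_exponential_decay_general v hv_cont hv_nonneg hv_int ψ hψ Ψ hΨ a hasymp
end
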